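/- Suppose the error e := (E - E_h, J - J_h) ∈ V satisfies, for every (v, w) ∈ V admitting a decomposition v = ∇q + ṽ, w = curl θ + w̃ with ω‖∇q‖_{ε} + ω‖∇θ‖_{α} + ‖∇ṽ‖_{χ} + ‖∇w̃‖_{ζ} ≤ C_rd ⦀(v,w)⦀, the four bounds |b(e, (∇q, 0))| ≤ η_div·ω‖∇q‖_ε, |b(e, (0, curl θ))| ≤ η_curl·ω‖∇θ‖_α, |b(e, (ṽ, 0))| ≤ η_cc·‖∇ṽ‖_χ, |b(e, (0, w̃))| ≤ η_gd·‖∇w̃‖_ζ. If b satisfies the inf-sup condition on V with constant C_is, then ⦀e⦀ ≤ C_is⁻¹ C_rd (η_div + η_curl + η_cc + η_gd). -/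

import Mathlib

/-!
Adding up the four componentwise bounds over a regular decomposition of `v` bounds the
residual functional `b(e, ·)` by `C_rd (η₁ + η₂ + η₃ + η₄) ‖v‖`; the inf-sup condition turns
this dual-norm bound into a bound on `‖e‖`.
-/

theorem norm_map_sum_le_sum_mul_sum {ι E F 𝓕 : Type*} [AddCommMonoid E]
    [SeminormedAddCommGroup F] [FunLike 𝓕 E F] [AddMonoidHomClass 𝓕 E F]
    (φ : 𝓕) (s : Finset ι) (w : ι → E) {η n : ι → ℝ}
    (hη : ∀ i ∈ s, 0 ≤ η i) (hn : ∀ i ∈ s, 0 ≤ n i)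
    (hw : ∀ i ∈ s, ‖φ (w i)‖ ≤ η i * n i) :
    ‖φ (∑ i ∈ s, w i)‖ ≤ (∑ i ∈ s, η i) * ∑ i ∈ s, n i := by
  rw [map_sum, Finset.sum_mul]
  refine (norm_sum_le _ _).trans (Finset.sum_le_sum fun i hi => (hw i hi).trans ?_)
  exact mul_le_mul_of_nonneg_left (Finset.single_le_sum hn hi) (hη i hi)

theorem mul_norm_le_of_le_iSup_div {E : Type*} [NormedAddCommGroup E] {f : E → ℝ} {u : E}
    (hu : u ≠ 0) {c K : ℝ} (hc : c ≤ ⨆ v : {v : E // v ≠ 0}, f v / (‖u‖ * ‖v.1‖))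
    (hf : ∀ v, f v ≤ K * ‖v‖) : c * ‖u‖ ≤ K := by
  have hu' : 0 < ‖u‖ := norm_pos_iff.mpr hu
  have : Nonempty {v : E // v ≠ 0} := ⟨⟨u, hu⟩⟩
  suffices c ≤ K / ‖u‖ from (le_div_iff₀ hu').mp this
  refine hc.trans (ciSup_le fun v => ?_)
  have hv : 0 < ‖v.1‖ := norm_pos_iff.mpr v.2
  rw [div_le_div_iff₀ (mul_pos hu' hv) hu']
  nlinarith [hf v.1]

theorem reliability_assembly_general
    {V : Type*} [NormedAddCommGroup V] [InnerProductSpace ℂ V]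
    (b : V →ₗ[ℂ] V →ₛₗ[starRingEnd ℂ] ℂ)
    (Cis Crd : ℝ) (hCis : 0 < Cis) (hCrd : 0 < Crd)
    (hinfsup : ∀ u : V, u ≠ 0 →
      Cis ≤ ⨆ v : {v : V // v ≠ 0}, (b u v.1).re / (‖u‖ * ‖v.1‖))
    (n₁ n₂ n₃ n₄ : V → ℝ)
    (hn₁ : ∀ v, 0 ≤ n₁ v) (hn₂ : ∀ v, 0 ≤ n₂ v)
    (hn₃ : ∀ v, 0 ≤ n₃ v) (hn₄ : ∀ v, 0 ≤ n₄ v)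
    (η₁ η₂ η₃ η₄ : ℝ)
    (hη₁ : 0 ≤ η₁) (hη₂ : 0 ≤ η₂) (hη₃ : 0 ≤ η₃) (hη₄ : 0 ≤ η₄)
    (e : V)
    -- every `v` admits a regular decomposition with controlled weights
    (hdec : ∀ v : V, ∃ v₁ v₂ v₃ v₄ : V, v = v₁ + v₂ + v₃ + v₄ ∧
      n₁ v₁ + n₂ v₂ + n₃ v₃ + n₄ v₄ ≤ Crd * ‖v‖)
    -- the four componentwise residual bounds on every admissible decomposition
    (hbounds : ∀ v v₁ v₂ v₃ v₄ : V, v = v₁ + v₂ + v₃ + v₄ →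
      n₁ v₁ + n₂ v₂ + n₃ v₃ + n₄ v₄ ≤ Crd * ‖v‖ →
      ‖b e v₁‖ ≤ η₁ * n₁ v₁ ∧ ‖b e v₂‖ ≤ η₂ * n₂ v₂ ∧
      ‖b e v₃‖ ≤ η₃ * n₃ v₃ ∧ ‖b e v₄‖ ≤ η₄ * n₄ v₄) :
    ‖e‖ ≤ Cis⁻¹ * Crd * (η₁ + η₂ + η₃ + η₄) := by
  rcases eq_or_ne e 0 with rfl | he
  · simp only [norm_zero]
    positivity
  have hres : ∀ v, (b e v).re ≤ Crd * (η₁ + η₂ + η₃ + η₄) * ‖v‖ := fun v => by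
    obtain ⟨v₁, v₂, v₃, v₄, rfl, hw⟩ := hdec v
    obtain ⟨h₁, h₂, h₃, h₄⟩ := hbounds _ v₁ v₂ v₃ v₄ rfl hw
    have hsum := norm_map_sum_le_sum_mul_sum (b e) Finset.univ ![v₁, v₂, v₃, v₄]
      (η := ![η₁, η₂, η₃, η₄]) (n := ![n₁ v₁, n₂ v₂, n₃ v₃, n₄ v₄])
      (by simp [Fin.forall_fin_succ, *]) (by simp [Fin.forall_fin_succ, *])
      (by simp [Fin.forall_fin_succ, *])
    simp only [Fin.sum_univ_four, Matrix.cons_val] at hsum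
    calc (b e _).re ≤ ‖b e (v₁ + v₂ + v₃ + v₄)‖ := Complex.re_le_norm _
      _ ≤ (η₁ + η₂ + η₃ + η₄) * (Crd * ‖v₁ + v₂ + v₃ + v₄‖) := hsum.trans (by gcongr)
      _ = _ := by ring
  have hnorm := mul_norm_le_of_le_iSup_div he (hinfsup e he) hres
  rw [mul_assoc, le_inv_mul_iff₀ hCis]
  linarith [hnorm]

/-- assembly of the reliability proof.  If every `v ∈ V` admits a
regular decomposition `v = v₁ + v₂ + v₃ + v₄` with weights
`n₁(v₁) + n₂(v₂) + n₃(v₃) + n₄(v₄) ≤ C_rd ⦀v⦀`, the error `e` satisfies the four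
componentwise residual bounds `|b(e,vᵢ)| ≤ ηᵢ nᵢ(vᵢ)` on every such decomposition, and
`b` satisfies the inf-sup condition with constant `C_is`, then
`⦀e⦀ ≤ C_is⁻¹ C_rd (η₁ + η₂ + η₃ + η₄)`. -/
theorem reliability_assembly
    {V : Type*} [NormedAddCommGroup V] [InnerProductSpace ℂ V] [CompleteSpace V]
    (b : V →ₗ[ℂ] V →ₛₗ[starRingEnd ℂ] ℂ)
    (M : ℝ) (hbdd : ∀ u v : V, ‖b u v‖ ≤ M * ‖u‖ * ‖v‖)
    (Cis Crd : ℝ) (hCis : 0 < Cis) (hCrd : 0 < Crd)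
    (hinfsup : ∀ u : V, u ≠ 0 →
      Cis ≤ ⨆ v : {v : V // v ≠ 0}, (b u v.1).re / (‖u‖ * ‖v.1‖))
    (n₁ n₂ n₃ n₄ : V → ℝ)
    (hn₁ : ∀ v, 0 ≤ n₁ v) (hn₂ : ∀ v, 0 ≤ n₂ v)
    (hn₃ : ∀ v, 0 ≤ n₃ v) (hn₄ : ∀ v, 0 ≤ n₄ v)
    (η₁ η₂ η₃ η₄ : ℝ)
    (hη₁ : 0 ≤ η₁) (hη₂ : 0 ≤ η₂) (hη₃ : 0 ≤ η₃) (hη₄ : 0 ≤ η₄)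
    (e : V)
    -- every `v` admits a regular decomposition with controlled weights
    (hdec : ∀ v : V, ∃ v₁ v₂ v₃ v₄ : V, v = v₁ + v₂ + v₃ + v₄ ∧
      n₁ v₁ + n₂ v₂ + n₃ v₃ + n₄ v₄ ≤ Crd * ‖v‖)
    -- the four componentwise residual bounds on every admissible decomposition
    (hbounds : ∀ v v₁ v₂ v₃ v₄ : V, v = v₁ + v₂ + v₃ + v₄ →
      n₁ v₁ + n₂ v₂ + n₃ v₃ + n₄ v₄ ≤ Crd * ‖v‖ →
      ‖b e v₁‖ ≤ η₁ * n₁ v₁ ∧ ‖b e v₂‖ ≤ η₂ * n₂ v₂ ∧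
      ‖b e v₃‖ ≤ η₃ * n₃ v₃ ∧ ‖b e v₄‖ ≤ η₄ * n₄ v₄) :
    ‖e‖ ≤ Cis⁻¹ * Crd * (η₁ + η₂ + η₃ + η₄) :=
  reliability_assembly_general b Cis Crd hCis hCrd hinfsup n₁ n₂ n₃ n₄ hn₁ hn₂ hn₃ hn₄ η₁ η₂ η₃ η₄
    hη₁ hη₂ hη₃ hη₄ e hdec hbounds
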